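/- arXiv:1611.09522 — 4 statements merged into one kernel-verified Lean document; each statement's English description precedes it below -/
import Mathlib

section
/- Let (X,ρ) be a metric space, F : X → (−∞,+∞], r > 0 and y ∈ X. If x_r minimizes x ↦ F(x) + ρ(x,y)²/(2r) over X and F(x_r) < ∞, then the descending slope of F at x_r satisfies limsup_{z→x_r} max{F(x_r) − F(z), 0}/ρ(x_r,z) ≤ ρ(x_r,y)/r. -/
/-!
Comparing the penalized functional at `x_r` and at `z` gives
`F(x_r) - F(z) ≤ (ρ(z,y)² - ρ(x_r,y)²)/(2r) ≤ ρ(x_r,z) (ρ(z,y) + ρ(x_r,y))/(2r)`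
by the triangle inequality. Dividing by `ρ(x_r,z)` and letting `z → x_r`, the right-hand side
tends to `ρ(x_r,y)/r`.
-/

open MeasureTheory Filter Topology Set
open scoped ENNReal NNReal

/-- The descending slope of `F : X → (−∞,+∞]` at `x`. -/
noncomputable def descSlope {X : Type*} [MetricSpace X] (F : X → EReal) (x : X) : ℝ≥0∞ :=
  Filter.limsup (fun z => ENNReal.ofReal ((max (F x - F z) 0).toReal / dist x z)) (𝓝[≠] x)

/-- `toReal` sends `±∞` to `0`, so infinite values of `a - b` need no separate treatment. -/
theorem EReal.toReal_max_sub_zero_le_of_add_le_add {a b : EReal} {p q : ℝ}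
    (h : a + p ≤ b + q) : (max (a - b) 0).toReal ≤ max (q - p) 0 := by
  have hab : a - b ≤ ((q - p : ℝ) : EReal) := by
    refine EReal.sub_le_of_le_add' ?_
    calc a = a + p - p := EReal.add_sub_cancel_right.symm
      _ ≤ b + q - p := EReal.sub_le_sub h le_rfl
      _ = b + ((q - p : ℝ) : EReal) := by rw [EReal.coe_sub, add_sub_assoc]
  have hmax : max (a - b) 0 ≤ ((max (q - p) 0 : ℝ) : EReal) :=
    max_le (hab.trans (EReal.coe_le_coe_iff.2 (le_max_left _ _)))
      (EReal.coe_nonneg.2 (le_max_right _ _))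
  simpa using EReal.toReal_le_toReal hmax (ne_bot_of_le_ne_bot EReal.zero_ne_bot (le_max_right _ _))
    (EReal.coe_ne_top _)

theorem dist_sq_sub_dist_sq_le {X : Type*} [PseudoMetricSpace X] (x y z : X) :
    dist z y ^ 2 - dist x y ^ 2 ≤ dist x z * (dist z y + dist x y) := by
  have htri : dist z y - dist x y ≤ dist x z := by
    linarith [dist_triangle_left z y x]
  calc dist z y ^ 2 - dist x y ^ 2 = (dist z y - dist x y) * (dist z y + dist x y) := by ring
    _ ≤ dist x z * (dist z y + dist x y) := by gcongr

theorem descSlope_le_of_forall_le {X : Type*} [MetricSpace X] {F : X → EReal} {x : X}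
    {g : X → ℝ} (hg : ContinuousAt g x)
    (h : ∀ z ≠ x, (max (F x - F z) 0).toReal ≤ dist x z * g z) :
    descSlope F x ≤ ENNReal.ofReal (g x) := by
  have hpt : ∀ z ≠ x, (max (F x - F z) 0).toReal / dist x z ≤ g z := fun z hz =>
    (div_le_iff₀' (dist_pos.2 hz.symm)).2 (h z hz)
  calc descSlope F x ≤ limsup (fun z => ENNReal.ofReal (g z)) (𝓝[≠] x) :=
        limsup_le_limsup (eventually_nhdsWithin_of_forall fun z hz =>
          ENNReal.ofReal_le_ofReal (hpt z hz))
    _ ≤ limsup (fun z => ENNReal.ofReal (g z)) (𝓝 x) := limsup_le_limsup_of_le nhdsWithin_le_nhds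
    _ = ENNReal.ofReal (g x) := (ENNReal.continuous_ofReal.continuousAt.tendsto.comp hg).limsup_eq

theorem slope_bound_at_minimizer_general {X : Type*} [MetricSpace X]
    (F : X → EReal)
    (r : ℝ) (hr : 0 < r) (y xr : X)
    (hmin : ∀ z : X, F xr + (((dist xr y)^2 / (2*r) : ℝ) : EReal)
      ≤ F z + (((dist z y)^2 / (2*r) : ℝ) : EReal)) :
    descSlope F xr ≤ ENNReal.ofReal (dist xr y / r) := by
  have hg : ContinuousAt (fun z => (dist z y + dist xr y) / (2 * r)) xr := by fun_prop
  have hbound : ∀ z ≠ xr, (max (F xr - F z) 0).toReal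
      ≤ dist xr z * ((dist z y + dist xr y) / (2 * r)) := fun z _ => by
    refine (EReal.toReal_max_sub_zero_le_of_add_le_add (hmin z)).trans (max_le ?_ (by positivity))
    rw [← sub_div, mul_div_assoc']
    exact div_le_div_of_nonneg_right (dist_sq_sub_dist_sq_le xr y z) (by positivity)
  convert descSlope_le_of_forall_le hg hbound using 2
  field_simp
  ring

/-- The slope estimate at a minimizer of the penalized functional:
if `x_r` minimizes `x ↦ F(x) + ρ(x,y)²/(2r)` and `F(x_r) < ∞`, then the descending slope
of `F` at `x_r` is at most `ρ(x_r,y)/r`. -/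
theorem slope_bound_at_minimizer {X : Type*} [MetricSpace X]
    (F : X → EReal) (hbot : ∀ z : X, F z ≠ ⊥)
    (r : ℝ) (hr : 0 < r) (y xr : X)
    (hmin : ∀ z : X, F xr + (((dist xr y)^2 / (2*r) : ℝ) : EReal)
      ≤ F z + (((dist z y)^2 / (2*r) : ℝ) : EReal))
    (hfin : F xr < ⊤) :
    descSlope F xr ≤ ENNReal.ofReal (dist xr y / r) :=
  slope_bound_at_minimizer_general F r hr y xr hmin
end

section
/- Let (X,ρ) be a metric space and (F_r)_{r∈(0,R)} a family of functionals F_r : X → (−∞,+∞] with common domain such that |F_{r_1}(x) − F_{r_2}(x)| ≤ L*|r_1 − r_2| for all r_1,r_2 ∈ (0,R) and all x in the domain. Fix y ∈ X, and for each r ∈ (0,R) let x_r be a minimizer of x ↦ F_r(x) + ρ(x,y)²/(2r). Then for all 0 < r_1 < r_2 < R: ρ(x_{r_1},y)² ≤ ρ(x_{r_2},y)² + 4 r_1 r_2 L*. -/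
/-!
Compare the minimality of `x₁ = x_{r₁}` against the competitor `x₂ = x_{r₂}` and vice versa:
after clearing denominators the two inequalities read `d₁ - d₂ ≤ 2 r₁ (F_{r₁}(x₂) - F_{r₁}(x₁))`
and `d₂ - d₁ ≤ 2 r₂ (F_{r₂}(x₁) - F_{r₂}(x₂))`, where `dᵢ = ρ(xᵢ, y)²`. Weighting them by `r₂`
and `r₁` and adding, the functional values recombine into two differences `F_{r₁} - F_{r₂}`,
each at most `L* (r₂ - r₁)`, so `(r₂ - r₁)(d₁ - d₂) ≤ 4 r₁ r₂ L* (r₂ - r₁)`.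
-/

namespace EReal

theorem lt_top_of_add_coe_le_add_coe {a b : EReal} {u v : ℝ} (h : a + u ≤ b + v) (hb : b < ⊤) :
    a < ⊤ := by
  refine lt_top_iff_ne_top.2 fun ha => ?_
  rw [ha, top_add_coe, top_le_iff] at h
  exact (add_lt_top hb.ne (coe_ne_top v)).ne h

theorem toReal_add_coe_le_toReal_add_coe {a b : EReal} {u v : ℝ} (h : a + u ≤ b + v)
    (ha : a ≠ ⊤) (ha' : a ≠ ⊥) (hb : b ≠ ⊤) (hb' : b ≠ ⊥) : a.toReal + u ≤ b.toReal + v := by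
  rwa [← coe_toReal ha ha', ← coe_toReal hb hb', ← coe_add, ← coe_add, EReal.coe_le_coe_iff] at h

end EReal

theorem le_add_of_penalized_minimizers {α : Type*} (f₁ f₂ φ : α → ℝ) {x₁ x₂ : α}
    {r₁ r₂ L : ℝ} (hr₁ : 0 < r₁) (hr : r₁ < r₂)
    (hmin₁ : f₁ x₁ + φ x₁ / (2 * r₁) ≤ f₁ x₂ + φ x₂ / (2 * r₁))
    (hmin₂ : f₂ x₂ + φ x₂ / (2 * r₂) ≤ f₂ x₁ + φ x₁ / (2 * r₂))
    (hlip₁ : |f₁ x₁ - f₂ x₁| ≤ L * |r₁ - r₂|) (hlip₂ : |f₁ x₂ - f₂ x₂| ≤ L * |r₁ - r₂|) :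
    φ x₁ ≤ φ x₂ + 4 * r₁ * r₂ * L := by
  have hr₂ : 0 < r₂ := hr₁.trans hr
  rw [abs_sub_comm r₁, abs_of_pos (sub_pos.2 hr)] at hlip₁ hlip₂
  have key₁ : φ x₁ - φ x₂ ≤ (f₁ x₂ - f₁ x₁) * (2 * r₁) := by
    rw [← div_le_iff₀ (by positivity), sub_div]
    linarith
  have key₂ : φ x₂ - φ x₁ ≤ (f₂ x₁ - f₂ x₂) * (2 * r₂) := by
    rw [← div_le_iff₀ (by positivity), sub_div]
    linarith
  have hsum : (r₂ - r₁) * (φ x₁ - φ x₂) ≤ (r₂ - r₁) * (4 * r₁ * r₂ * L) := by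
    calc (r₂ - r₁) * (φ x₁ - φ x₂) = r₂ * (φ x₁ - φ x₂) + r₁ * (φ x₂ - φ x₁) := by ring
      _ ≤ r₂ * ((f₁ x₂ - f₁ x₁) * (2 * r₁)) + r₁ * ((f₂ x₁ - f₂ x₂) * (2 * r₂)) := by
        gcongr
      _ = 2 * r₁ * r₂ * ((f₁ x₂ - f₂ x₂) - (f₁ x₁ - f₂ x₁)) := by ring
      _ ≤ 2 * r₁ * r₂ * (L * (r₂ - r₁) + L * (r₂ - r₁)) := by
        gcongr 2 * r₁ * r₂ * ?_
        linarith [le_of_abs_le hlip₂, neg_le_of_abs_le hlip₁]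
      _ = (r₂ - r₁) * (4 * r₁ * r₂ * L) := by ring
  linarith [le_of_mul_le_mul_left hsum (sub_pos.2 hr)]

theorem minimizer_distance_monotone_general {X : Type*} [MetricSpace X]
    (R Lstar : ℝ)
    (F : ℝ → X → EReal) (dom : Set X) (hdom : dom.Nonempty)
    (hfin : ∀ r ∈ Set.Ioo (0:ℝ) R, ∀ x : X, F r x < ⊤ ↔ x ∈ dom)
    (hbot : ∀ r ∈ Set.Ioo (0:ℝ) R, ∀ x : X, F r x ≠ ⊥)
    (hlip : ∀ r₁ ∈ Set.Ioo (0:ℝ) R, ∀ r₂ ∈ Set.Ioo (0:ℝ) R, ∀ x ∈ dom,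
      |(F r₁ x).toReal - (F r₂ x).toReal| ≤ Lstar * |r₁ - r₂|)
    (y : X) (xmin : ℝ → X)
    (hxmin : ∀ r ∈ Set.Ioo (0:ℝ) R, ∀ z : X,
      F r (xmin r) + (((dist (xmin r) y)^2 / (2*r) : ℝ) : EReal)
        ≤ F r z + (((dist z y)^2 / (2*r) : ℝ) : EReal)) :
    ∀ r₁ ∈ Set.Ioo (0:ℝ) R, ∀ r₂ ∈ Set.Ioo (0:ℝ) R, r₁ < r₂ →
      (dist (xmin r₁) y)^2 ≤ (dist (xmin r₂) y)^2 + 4 * r₁ * r₂ * Lstar := by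
  have hmem : ∀ r ∈ Set.Ioo (0:ℝ) R, xmin r ∈ dom := fun r hr => by
    obtain ⟨z, hz⟩ := hdom
    exact (hfin r hr _).1
      (EReal.lt_top_of_add_coe_le_add_coe (hxmin r hr z) ((hfin r hr z).2 hz))
  have hmin : ∀ r ∈ Set.Ioo (0:ℝ) R, ∀ z ∈ dom,
      (F r (xmin r)).toReal + (dist (xmin r) y)^2 / (2*r)
        ≤ (F r z).toReal + (dist z y)^2 / (2*r) := fun r hr z hz =>
    EReal.toReal_add_coe_le_toReal_add_coe (hxmin r hr z) ((hfin r hr _).2 (hmem r hr)).ne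
      (hbot r hr _) ((hfin r hr z).2 hz).ne (hbot r hr z)
  intro r₁ hr₁ r₂ hr₂ hr
  exact le_add_of_penalized_minimizers (fun x => (F r₁ x).toReal) (fun x => (F r₂ x).toReal)
    (fun x => dist x y ^ 2) hr₁.1 hr (hmin r₁ hr₁ _ (hmem r₂ hr₂)) (hmin r₂ hr₂ _ (hmem r₁ hr₁))
    (hlip r₁ hr₁ r₂ hr₂ _ (hmem r₁ hr₁)) (hlip r₁ hr₁ r₂ hr₂ _ (hmem r₂ hr₂))

/-- Monotonicity (up to an error `4 r₁ r₂ L*`) of the distance of the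
minimizers of the penalized problems to the base point `y`, for a family of functionals
with common domain that is Lipschitz in the parameter. -/
theorem minimizer_distance_monotone {X : Type*} [MetricSpace X]
    (R Lstar : ℝ) (hR : 0 < R) (hL : 0 ≤ Lstar)
    (F : ℝ → X → EReal) (dom : Set X) (hdom : dom.Nonempty)
    (hfin : ∀ r ∈ Set.Ioo (0:ℝ) R, ∀ x : X, F r x < ⊤ ↔ x ∈ dom)
    (hbot : ∀ r ∈ Set.Ioo (0:ℝ) R, ∀ x : X, F r x ≠ ⊥)
    (hlip : ∀ r₁ ∈ Set.Ioo (0:ℝ) R, ∀ r₂ ∈ Set.Ioo (0:ℝ) R, ∀ x ∈ dom,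
      |(F r₁ x).toReal - (F r₂ x).toReal| ≤ Lstar * |r₁ - r₂|)
    (y : X) (xmin : ℝ → X)
    (hxmin : ∀ r ∈ Set.Ioo (0:ℝ) R, ∀ z : X,
      F r (xmin r) + (((dist (xmin r) y)^2 / (2*r) : ℝ) : EReal)
        ≤ F r z + (((dist z y)^2 / (2*r) : ℝ) : EReal)) :
    ∀ r₁ ∈ Set.Ioo (0:ℝ) R, ∀ r₂ ∈ Set.Ioo (0:ℝ) R, r₁ < r₂ →
      (dist (xmin r₁) y)^2 ≤ (dist (xmin r₂) y)^2 + 4 * r₁ * r₂ * Lstar :=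
  minimizer_distance_monotone_general R Lstar F dom hdom hfin hbot hlip y xmin hxmin
end

section
/- Let E be admissible, fix s ∈ [0,T), y ∈ X, and a metric ρ on X that is bi-Lipschitz equivalent to the metrics d_t. For r ∈ (0,T−s) set J_r(y) := inf_x { E_{s+r}(x) + ρ(x,y)²/(2r) } and assume the infimum is attained at some x_r for every r. Then r ↦ J_r(y) is locally Lipschitz on (0,T−s), and for almost every r ∈ (0,T−s): (d/dr) J_r(y) = −ρ(x_r,y)²/(2r²) + (∂_r E_{s+r})(x_r). -/
open MeasureTheory Filter Topology Set
open scoped ENNReal NNReal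

/-- A time-dependent family of complete separable geodesic metrics `d t` (`t ∈ [0,T]`) on a
topological space `X`, all inducing the given topology, whose mutual deviation is
log-Lipschitz in time with constant `L`. -/
structure DynMetric (X : Type*) [TopologicalSpace X] (T : ℝ) (L : ℝ) : Type _ where
  d : ℝ → X → X → ℝ
  d_self : ∀ t ∈ Set.Icc (0:ℝ) T, ∀ x : X, d t x x = 0
  d_pos : ∀ t ∈ Set.Icc (0:ℝ) T, ∀ x y : X, x ≠ y → 0 < d t x y
  d_symm : ∀ t ∈ Set.Icc (0:ℝ) T, ∀ x y : X, d t x y = d t y x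
  d_triangle : ∀ t ∈ Set.Icc (0:ℝ) T, ∀ x y z : X, d t x z ≤ d t x y + d t y z
  nhds_basis : ∀ t ∈ Set.Icc (0:ℝ) T, ∀ x : X,
    (𝓝 x).HasBasis (fun ε : ℝ => 0 < ε) (fun ε => {y : X | d t x y < ε})
  complete : ∀ t ∈ Set.Icc (0:ℝ) T, ∀ u : ℕ → X,
    (∀ ε : ℝ, 0 < ε → ∃ N : ℕ, ∀ m ≥ N, ∀ n ≥ N, d t (u m) (u n) < ε) →
    ∃ x : X, Tendsto u atTop (𝓝 x)
  separable : ∃ s : Set X, s.Countable ∧ Dense s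
  geodesic : ∀ t ∈ Set.Icc (0:ℝ) T, ∀ x y : X, ∃ γ : ℝ → X, γ 0 = x ∧ γ 1 = y ∧
    ∀ a ∈ Set.Icc (0:ℝ) 1, ∀ b ∈ Set.Icc (0:ℝ) 1, d t (γ a) (γ b) = |a - b| * d t x y
  logLip : ∀ s ∈ Set.Icc (0:ℝ) T, ∀ t ∈ Set.Icc (0:ℝ) T, ∀ x y : X, x ≠ y →
    |Real.log (d t x y / d s x y)| ≤ L * |t - s|

/-- The (descending) metricSlope of `F` at `x` with respect to the distance `ρ`. -/
noncomputable def metricSlope {X : Type*} [TopologicalSpace X] (ρ : X → X → ℝ) (F : X → EReal)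
    (x : X) : ℝ≥0∞ :=
  Filter.limsup (fun y => ENNReal.ofReal ((max (F x - F y) 0).toReal / ρ x y)) (𝓝[≠] x)

/-- An admissible time-dependent energy functional `E : [0,T] × X → (−∞,+∞]`:
time-independent nonempty domain, uniform lower bound, lower semicontinuity,
uniform Lipschitz dependence on time on the domain, and a common (full-measure) set of
differentiability points in time, with derivative `deriv`. -/
structure Admissible {X : Type*} [TopologicalSpace X] (T : ℝ) (E : ℝ → X → EReal) : Type _ where
  dom : Set X
  dom_nonempty : dom.Nonempty
  finite_iff : ∀ t ∈ Set.Icc (0:ℝ) T, ∀ x : X, E t x < ⊤ ↔ x ∈ dom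
  ne_bot : ∀ t ∈ Set.Icc (0:ℝ) T, ∀ x : X, E t x ≠ ⊥
  lowBound : ℝ
  le_energy : ∀ t ∈ Set.Icc (0:ℝ) T, ∀ x : X, (lowBound : EReal) ≤ E t x
  lsc : ∀ t ∈ Set.Icc (0:ℝ) T, LowerSemicontinuous (E t)
  lipT : ℝ
  lipT_nonneg : 0 ≤ lipT
  lip : ∀ s ∈ Set.Icc (0:ℝ) T, ∀ t ∈ Set.Icc (0:ℝ) T, ∀ x ∈ dom,
    |(E t x).toReal - (E s x).toReal| ≤ lipT * |t - s|
  deriv : ℝ → X → ℝ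
  diffSet : Set ℝ
  diffSet_subset : diffSet ⊆ Set.Icc (0:ℝ) T
  diffSet_ae : volume (Set.Icc (0:ℝ) T \ diffSet) = 0
  hasDeriv : ∀ t ∈ diffSet, ∀ x ∈ dom,
    HasDerivWithinAt (fun r => (E r x).toReal) (deriv t x) (Set.Icc (0:ℝ) T) t

/-! The value function is the lower envelope of the curves
`r' ↦ E_{s+r'}(x_r) + ρ(x_r,y)²/(2r')`, the curve of index `r` touching it at `r' = r`.
Comparing `x_r` with a fixed point of the domain bounds `ρ(x_r,y)²` uniformly, so on every
`[a,b] ⊂ (0,T-s)` these curves are uniformly Lipschitz, and hence so is their envelope.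
Rademacher's theorem then gives differentiability a.e.; at a differentiability point that is also
a differentiability time of `E`, the touching curve minus the envelope has a local minimum, so the
two derivatives agree. -/

theorem LipschitzOnWith.of_touching_majorants {α : Type*} [PseudoMetricSpace α] {f : α → ℝ}
    {s : Set α} (g : α → α → ℝ) (K : ℝ) (hle : ∀ x ∈ s, ∀ z ∈ s, f z ≤ g x z)
    (heq : ∀ x ∈ s, g x x = f x) (hg : ∀ x ∈ s, ∀ z ∈ s, g x z ≤ g x x + K * dist z x) :
    LipschitzOnWith K.toNNReal f s :=
  LipschitzOnWith.of_le_add_mul' K fun z hz x hx =>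
    (hle x hx z hz).trans <| (hg x hx z hz).trans_eq <| by rw [heq x hx]

theorem HasDerivAt.of_eventually_le_of_eq {f g : ℝ → ℝ} {g' x : ℝ} (hg : HasDerivAt g g' x)
    (hf : DifferentiableAt ℝ f x) (hle : ∀ᶠ z in 𝓝 x, f z ≤ g z) (heq : f x = g x) :
    HasDerivAt f g' x := by
  have hmin : IsLocalMin (fun z => g z - f z) x :=
    hle.mono fun z hz => by simp only [heq, sub_self, sub_nonneg, hz]
  have h := hmin.hasDerivAt_eq_zero (hg.sub hf.hasDerivAt)
  exact (sub_eq_zero.mp h) ▸ hf.hasDerivAt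

theorem ae_differentiableAt_of_lipschitzOnWith_Icc {V : Type*} [NormedAddCommGroup V]
    [NormedSpace ℝ V] [FiniteDimensional ℝ V] {f : ℝ → V} {a b : ℝ}
    (hf : ∀ a' b', a < a' → a' ≤ b' → b' < b → ∃ K, LipschitzOnWith K f (Icc a' b')) :
    ∀ᵐ r ∂volume.restrict (Ioo a b), DifferentiableAt ℝ f r := by
  have hbv : LocallyBoundedVariationOn f (Ioo a b) := by
    intro p q hp hq
    by_cases hpq : p ≤ q
    · obtain ⟨K, hK⟩ := hf p q hp.1 hpq hq.2
      exact (hK.locallyBoundedVariationOn p q ⟨le_rfl, hpq⟩ ⟨hpq, le_rfl⟩).mono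
        fun z hz => ⟨hz.2, hz.2⟩
    · exact BoundedVariationOn.of_subsingleton fun u hu v hv =>
        absurd (hu.2.1.trans hu.2.2) hpq
  rw [ae_restrict_iff' measurableSet_Ioo]
  filter_upwards [hbv.ae_differentiableWithinAt_of_mem] with r hr hmem
  exact (hr hmem).differentiableAt (isOpen_Ioo.mem_nhds hmem)

theorem hasDerivAt_div_two_mul (q : ℝ) {r : ℝ} (hr : r ≠ 0) :
    HasDerivAt (fun r => q / (2 * r)) (-q / (2 * r ^ 2)) r := by
  have h : (fun r : ℝ => q / (2 * r)) = fun r => q / 2 * r⁻¹ := by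
    ext r; ring
  rw [h]
  exact ((hasDerivAt_inv hr).const_mul (q / 2)).congr_deriv (by ring)

theorem div_two_mul_le_add_mul_dist {q B a u v : ℝ} (hq : 0 ≤ q) (hqB : q ≤ B) (ha : 0 < a)
    (hu : a ≤ u) (hv : a ≤ v) : q / (2 * v) ≤ q / (2 * u) + B / (2 * a ^ 2) * dist v u := by
  have hu0 : 0 < u := ha.trans_le hu
  have hv0 : 0 < v := ha.trans_le hv
  have hdiff : q / (2 * v) - q / (2 * u) = q * (u - v) / (2 * u * v) := by
    field_simp
  have hnum : q * (u - v) ≤ B * dist v u := by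
    rw [Real.dist_eq, abs_sub_comm]
    exact (mul_le_mul_of_nonneg_left (le_abs_self _) hq).trans
      (mul_le_mul_of_nonneg_right hqB (abs_nonneg _))
  have hden : 2 * a ^ 2 ≤ 2 * u * v := by nlinarith
  have hB : 0 ≤ B * dist v u := mul_nonneg (hq.trans hqB) dist_nonneg
  calc q / (2 * v) = q / (2 * u) + q * (u - v) / (2 * u * v) := by linarith
    _ ≤ q / (2 * u) + B * dist v u / (2 * a ^ 2) := by gcongr
    _ = q / (2 * u) + B / (2 * a ^ 2) * dist v u := by ring

section ValueFunction

variable {X : Type*} [TopologicalSpace X] {T : ℝ} {E : ℝ → X → EReal}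

namespace Admissible

variable (A : Admissible T E) {t : ℝ} {x : X}

theorem coe_toReal (ht : t ∈ Icc 0 T) (hx : x ∈ A.dom) : ((E t x).toReal : EReal) = E t x :=
  EReal.coe_toReal ((A.finite_iff t ht x).mpr hx).ne (A.ne_bot t ht x)

theorem lowBound_le_toReal (ht : t ∈ Icc 0 T) (hx : x ∈ A.dom) :
    A.lowBound ≤ (E t x).toReal := by
  exact_mod_cast (A.coe_toReal ht hx).symm ▸ A.le_energy t ht x

theorem toReal_le_add {t' : ℝ} (ht : t ∈ Icc 0 T) (ht' : t' ∈ Icc 0 T) (hx : x ∈ A.dom) :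
    (E t' x).toReal ≤ (E t x).toReal + A.lipT * |t' - t| := by
  linarith [le_abs_self ((E t' x).toReal - (E t x).toReal), A.lip t ht t' ht' x hx]

theorem exists_toReal_le (hx : x ∈ A.dom) : ∃ M, ∀ t ∈ Icc 0 T, (E t x).toReal ≤ M := by
  refine ⟨(E 0 x).toReal + A.lipT * T, fun t ht => ?_⟩
  have h0 : (0 : ℝ) ∈ Icc 0 T := ⟨le_rfl, ht.1.trans ht.2⟩
  have htT : |t - 0| ≤ T := by rw [sub_zero, abs_of_nonneg ht.1]; exact ht.2
  linarith [A.toReal_le_add h0 ht hx, mul_le_mul_of_nonneg_left htT A.lipT_nonneg]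

theorem ae_add_mem_diffSet {s : ℝ} (hs : 0 ≤ s) :
    ∀ᵐ r ∂volume.restrict (Ioo 0 (T - s)), s + r ∈ A.diffSet := by
  have h : ∀ᵐ t, t ∈ Icc 0 T → t ∈ A.diffSet := by
    rw [ae_iff]
    simp only [Classical.not_imp]
    exact A.diffSet_ae
  rw [ae_restrict_iff' measurableSet_Ioo]
  filter_upwards [(measurePreserving_add_left volume s).quasiMeasurePreserving.ae h]
    with r hr hmem
  exact hr ⟨by linarith [hmem.1], by linarith [hmem.2]⟩

end Admissible

noncomputable def yosidaCost (E : ℝ → X → EReal) (ρ : X → X → ℝ) (s : ℝ) (y x : X) (r : ℝ) : ℝ :=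
  (E (s + r) x).toReal + ρ x y ^ 2 / (2 * r)

def IsYosidaMinimizer (E : ℝ → X → EReal) (ρ : X → X → ℝ) (T s : ℝ) (y : X) (xmin : ℝ → X) :
    Prop :=
  ∀ r ∈ Ioo (0 : ℝ) (T - s), ∀ z : X,
    E (s + r) (xmin r) + ((ρ (xmin r) y ^ 2 / (2 * r) : ℝ) : EReal)
      ≤ E (s + r) z + ((ρ z y ^ 2 / (2 * r) : ℝ) : EReal)

theorem add_mem_Ioo_of_mem_Ioo_sub {s r : ℝ} (hs : 0 ≤ s) (hr : r ∈ Ioo 0 (T - s)) :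
    s + r ∈ Ioo 0 T :=
  ⟨by linarith [hr.1], by linarith [hr.2]⟩

theorem Admissible.hasDerivAt_yosidaCost (A : Admissible T E) (ρ : X → X → ℝ) {s r : ℝ} {y x : X}
    (hx : x ∈ A.dom) (hr : r ≠ 0) (hsr : s + r ∈ Ioo 0 T) (hds : s + r ∈ A.diffSet) :
    HasDerivAt (yosidaCost E ρ s y x) (-(ρ x y) ^ 2 / (2 * r ^ 2) + A.deriv (s + r) x) r := by
  have hE : HasDerivAt (fun t => (E t x).toReal) (A.deriv (s + r) x) (s + r) :=
    (A.hasDeriv _ hds x hx).hasDerivAt (Icc_mem_nhds hsr.1 hsr.2)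
  exact ((hE.comp_const_add s r).add (hasDerivAt_div_two_mul (ρ x y ^ 2) hr)).congr_deriv (add_comm _ _)

namespace IsYosidaMinimizer

variable {ρ : X → X → ℝ} {s : ℝ} {y : X} {xmin : ℝ → X}

theorem mem_dom (hxmin : IsYosidaMinimizer E ρ T s y xmin) (A : Admissible T E) (hs : 0 ≤ s)
    {r : ℝ} (hr : r ∈ Ioo 0 (T - s)) : xmin r ∈ A.dom := by
  have hsr := Ioo_subset_Icc_self (add_mem_Ioo_of_mem_Ioo_sub hs hr)
  obtain ⟨x₀, hx₀⟩ := A.dom_nonempty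
  have h := hxmin r hr x₀
  rw [← A.coe_toReal hsr hx₀, ← EReal.coe_add] at h
  refine (A.finite_iff _ hsr _).mp (lt_top_iff_ne_top.mpr fun htop => ?_)
  rw [htop, EReal.top_add_coe, top_le_iff] at h
  exact EReal.coe_ne_top _ h

theorem yosidaCost_le (hxmin : IsYosidaMinimizer E ρ T s y xmin) (A : Admissible T E)
    (hs : 0 ≤ s) {r : ℝ} (hr : r ∈ Ioo 0 (T - s)) {z : X} (hz : z ∈ A.dom) :
    yosidaCost E ρ s y (xmin r) r ≤ yosidaCost E ρ s y z r := by
  have hsr := Ioo_subset_Icc_self (add_mem_Ioo_of_mem_Ioo_sub hs hr)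
  have h := hxmin r hr z
  rwa [← A.coe_toReal hsr (hxmin.mem_dom A hs hr), ← A.coe_toReal hsr hz, ← EReal.coe_add,
    ← EReal.coe_add, EReal.coe_le_coe_iff] at h

theorem exists_sq_le (hxmin : IsYosidaMinimizer E ρ T s y xmin) (A : Admissible T E)
    (hs : 0 ≤ s) : ∃ B, ∀ r ∈ Ioo 0 (T - s), ρ (xmin r) y ^ 2 ≤ B := by
  obtain ⟨x₀, hx₀⟩ := A.dom_nonempty
  obtain ⟨M, hM⟩ := A.exists_toReal_le hx₀
  refine ⟨ρ x₀ y ^ 2 + 2 * T * |M - A.lowBound|, fun r hr => ?_⟩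
  have hsr := Ioo_subset_Icc_self (add_mem_Ioo_of_mem_Ioo_sub hs hr)
  have hcost := hxmin.yosidaCost_le A hs hr hx₀
  have hlow := A.lowBound_le_toReal hsr (hxmin.mem_dom A hs hr)
  have hquad : ρ (xmin r) y ^ 2 / (2 * r) ≤ ρ x₀ y ^ 2 / (2 * r) + |M - A.lowBound| := by
    unfold yosidaCost at hcost
    linarith [hM _ hsr, le_abs_self (M - A.lowBound)]
  have hr0 : 0 < r := hr.1
  have hrT : r ≤ T := by linarith [hr.2]
  calc ρ (xmin r) y ^ 2 = 2 * r * (ρ (xmin r) y ^ 2 / (2 * r)) := by field_simp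
    _ ≤ 2 * r * (ρ x₀ y ^ 2 / (2 * r) + |M - A.lowBound|) := by gcongr
    _ = ρ x₀ y ^ 2 + 2 * r * |M - A.lowBound| := by field_simp
    _ ≤ ρ x₀ y ^ 2 + 2 * T * |M - A.lowBound| := by gcongr

theorem lipschitzOnWith (hxmin : IsYosidaMinimizer E ρ T s y xmin) (A : Admissible T E)
    (hs : 0 ≤ s) {a b : ℝ} (ha : 0 < a) (hb : b < T - s) :
    ∃ K, LipschitzOnWith K (fun r => yosidaCost E ρ s y (xmin r) r) (Icc a b) := by
  obtain ⟨B, hB⟩ := hxmin.exists_sq_le A hs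
  have hab : Icc a b ⊆ Ioo 0 (T - s) := fun r hr => ⟨ha.trans_le hr.1, hr.2.trans_lt hb⟩
  refine ⟨_, LipschitzOnWith.of_touching_majorants (fun r => yosidaCost E ρ s y (xmin r))
    (A.lipT + B / (2 * a ^ 2)) (fun r hr _ hr' => ?_) (fun r _ => rfl) (fun r hr r' hr' => ?_)⟩
  · exact hxmin.yosidaCost_le A hs (hab hr') (hxmin.mem_dom A hs (hab hr))
  · have hE := A.toReal_le_add (Ioo_subset_Icc_self (add_mem_Ioo_of_mem_Ioo_sub hs (hab hr)))
      (Ioo_subset_Icc_self (add_mem_Ioo_of_mem_Ioo_sub hs (hab hr'))) (hxmin.mem_dom A hs (hab hr))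
    have hq := div_two_mul_le_add_mul_dist (sq_nonneg _) (hB r (hab hr)) ha hr.1 hr'.1
    rw [add_sub_add_left_eq_sub] at hE
    rw [Real.dist_eq] at hq ⊢
    simp only [yosidaCost, add_mul]
    linarith

theorem hasDerivAt (hxmin : IsYosidaMinimizer E ρ T s y xmin) (A : Admissible T E)
    (hs : 0 ≤ s) {r : ℝ} (hr : r ∈ Ioo 0 (T - s)) (hds : s + r ∈ A.diffSet)
    (hdiff : DifferentiableAt ℝ (fun r => yosidaCost E ρ s y (xmin r) r) r) :
    HasDerivAt (fun r => yosidaCost E ρ s y (xmin r) r)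
      (-(ρ (xmin r) y) ^ 2 / (2 * r ^ 2) + A.deriv (s + r) (xmin r)) r :=
  (A.hasDerivAt_yosidaCost ρ (hxmin.mem_dom A hs hr) hr.1.ne' (add_mem_Ioo_of_mem_Ioo_sub hs hr)
    hds).of_eventually_le_of_eq hdiff
    (eventually_of_mem (isOpen_Ioo.mem_nhds hr) fun _ hr' =>
      hxmin.yosidaCost_le A hs hr' (hxmin.mem_dom A hs hr)) rfl

end IsYosidaMinimizer

end ValueFunction

theorem value_function_derivative_general {X : Type*} [TopologicalSpace X] {T : ℝ}
    (E : ℝ → X → EReal) (A : Admissible T E)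
    (ρ : X → X → ℝ)
    (s : ℝ) (hs : s ∈ Set.Ico (0:ℝ) T) (y : X) (xmin : ℝ → X)
    (hxmin : ∀ r ∈ Set.Ioo (0:ℝ) (T - s), ∀ z : X,
      E (s+r) (xmin r) + (((ρ (xmin r) y)^2 / (2*r) : ℝ) : EReal)
        ≤ E (s+r) z + (((ρ z y)^2 / (2*r) : ℝ) : EReal)) :
    (∀ a b : ℝ, 0 < a → a ≤ b → b < T - s → ∃ K : ℝ≥0, LipschitzOnWith K
      (fun r => (E (s+r) (xmin r)).toReal + (ρ (xmin r) y)^2 / (2*r)) (Set.Icc a b)) ∧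
    ∀ᵐ r ∂(volume.restrict (Set.Ioo (0:ℝ) (T - s))),
      HasDerivAt (fun r' => (E (s+r') (xmin r')).toReal + (ρ (xmin r') y)^2 / (2*r'))
        (-(ρ (xmin r) y)^2 / (2*r^2) + A.deriv (s+r) (xmin r)) r := by
  have hmin : IsYosidaMinimizer E ρ T s y xmin := hxmin
  have hlip : ∀ a b : ℝ, 0 < a → a ≤ b → b < T - s → ∃ K : ℝ≥0,
      LipschitzOnWith K (fun r => yosidaCost E ρ s y (xmin r) r) (Icc a b) :=
    fun a b ha _ hb => hmin.lipschitzOnWith A hs.1 ha hb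
  refine ⟨hlip, ?_⟩
  filter_upwards [ae_differentiableAt_of_lipschitzOnWith_Icc hlip, A.ae_add_mem_diffSet hs.1,
    ae_restrict_mem measurableSet_Ioo] with r hdiff hds hr
  exact hmin.hasDerivAt A hs.1 hr hds hdiff

/-- Local Lipschitz continuity and a.e. differentiability of the Moreau–
Yosida type value function `r ↦ J_r(y)`, with the explicit formula for its derivative. -/
theorem value_function_derivative {X : Type*} [TopologicalSpace X] {T L : ℝ} (hT : 0 < T)
    (hL : 0 ≤ L) (D : DynMetric X T L) (E : ℝ → X → EReal) (A : Admissible T E)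
    (ρ : X → X → ℝ)
    (hρ0 : ∀ x : X, ρ x x = 0) (hρpos : ∀ x y : X, x ≠ y → 0 < ρ x y)
    (hρsymm : ∀ x y : X, ρ x y = ρ y x)
    (hρtri : ∀ x y z : X, ρ x z ≤ ρ x y + ρ y z)
    (c C : ℝ) (hc : 0 < c) (hC : 0 < C)
    (hequiv : ∀ t ∈ Set.Icc (0:ℝ) T, ∀ x y : X,
      c * D.d t x y ≤ ρ x y ∧ ρ x y ≤ C * D.d t x y)
    (s : ℝ) (hs : s ∈ Set.Ico (0:ℝ) T) (y : X) (xmin : ℝ → X)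
    (hxmin : ∀ r ∈ Set.Ioo (0:ℝ) (T - s), ∀ z : X,
      E (s+r) (xmin r) + (((ρ (xmin r) y)^2 / (2*r) : ℝ) : EReal)
        ≤ E (s+r) z + (((ρ z y)^2 / (2*r) : ℝ) : EReal)) :
    (∀ a b : ℝ, 0 < a → a ≤ b → b < T - s → ∃ K : ℝ≥0, LipschitzOnWith K
      (fun r => (E (s+r) (xmin r)).toReal + (ρ (xmin r) y)^2 / (2*r)) (Set.Icc a b)) ∧
    ∀ᵐ r ∂(volume.restrict (Set.Ioo (0:ℝ) (T - s))),
      HasDerivAt (fun r' => (E (s+r') (xmin r')).toReal + (ρ (xmin r') y)^2 / (2*r'))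
        (-(ρ (xmin r) y)^2 / (2*r^2) + A.deriv (s+r) (xmin r)) r :=
  value_function_derivative_general E A ρ s hs y xmin hxmin
end

section
/- The relative entropy S : [0,T] × P₂(X) → (−∞,+∞] satisfies: (1) Dom(S_t) := {μ : S_t(μ) < ∞} is independent of t; (2) inf_{t∈[0,T], μ∈P₂(X)} S_t(μ) > −∞ (indeed S_t(μ) ≥ −sup_x|f_t(x)| for all μ absolutely continuous w.r.t. m); (3) for every μ ∈ Dom(S), the map t ↦ S_t(μ) is Lipschitz with constant L* and S_t(μ) = Ent(μ|m) + ∫_X f_t dμ; (4) there is a set N ⊂ [0,T] of full Lebesgue measure, independent of μ, such that for every μ ∈ Dom(S) and every t ∈ N the derivative (d/dt)S_t(μ) exists and equals ∫_X (∂_t f_t)(x) dμ(x). -/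
/-!
Since `m_t` has density `e^{-f_t}` with respect to `m`, `log (dμ/dm_t) = log (dμ/dm) + f_t`
`μ`-a.e., hence `S_t(μ) = Ent(μ|m) + ∫ f_t dμ`. As `f_t` is bounded, the domain does not depend
on `t`, Gibbs' inequality `Ent(μ|m) ≥ 0` gives the lower bound, and the Lipschitz bound on `f`
passes to the integral. For the derivative, the set of `(x, t)` at which `f_·(x)` is
differentiable is product-measurable, so Rademacher's theorem and Fubini give a full-measure set
of times that are differentiability points for `m`-a.e. `x`; at those times dominated
convergence differentiates `∫ f_t dμ` for every `μ ≪ m`.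
-/

open MeasureTheory Filter Topology Set
open scoped ENNReal NNReal

/-- The squared `L²`-Kantorovich (Wasserstein) distance for the cost `d²`, as an infimum
over couplings, with values in `[0,∞]`. -/
noncomputable def WsqE {X : Type*} [MeasurableSpace X] (d : X → X → ℝ)
    (μ ν : Measure X) : ℝ≥0∞ :=
  ⨅ (π : Measure (X × X)) (_ : IsProbabilityMeasure π ∧
      π.map Prod.fst = μ ∧ π.map Prod.snd = ν),
    ∫⁻ p, ENNReal.ofReal ((d p.1 p.2)^2) ∂π

/-- The `L²`-Kantorovich (Wasserstein) distance for the cost `d²`. -/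
noncomputable def Wd {X : Type*} [MeasurableSpace X] (d : X → X → ℝ)
    (μ ν : Measure X) : ℝ :=
  Real.sqrt (WsqE d μ ν).toReal

/-- Membership in `P₂(X)`: Borel probability measures with finite second moment
(with respect to some, hence by the log-Lipschitz bound every, metric `d t`). -/
def MemP2 {X : Type*} [TopologicalSpace X] [MeasurableSpace X] {T L : ℝ}
    (D : DynMetric X T L) (μ : Measure X) : Prop :=
  IsProbabilityMeasure μ ∧
  ∃ t ∈ Set.Icc (0:ℝ) T, ∃ x₀ : X, (∫⁻ x, ENNReal.ofReal ((D.d t x x₀)^2) ∂μ) < ⊤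

/-- Membership in `AC²([0,T]; P₂(X))` w.r.t. the time-dependent Kantorovich metrics. -/
def WAC2 {X : Type*} [TopologicalSpace X] [MeasurableSpace X] {T L : ℝ}
    (D : DynMetric X T L) (μ : ℝ → Measure X) : Prop :=
  (∀ t ∈ Set.Icc (0:ℝ) T, MemP2 D (μ t)) ∧
  ∃ t' ∈ Set.Icc (0:ℝ) T, ∃ g : ℝ → ℝ,
    MemLp g 2 (volume.restrict (Set.Ioo (0:ℝ) T)) ∧
    ∀ s ∈ Set.Icc (0:ℝ) T, ∀ t ∈ Set.Icc (0:ℝ) T, s ≤ t →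
      Wd (D.d t') (μ s) (μ t) ≤ ∫ r in s..t, g r

/-- The metric speed `|μ̇|_t` of a curve of measures w.r.t. the Kantorovich metric `W_t`,
as a limit superior of difference quotients (which is the actual limit at a.e. `t` for
absolutely continuous curves). -/
noncomputable def wspeed {X : Type*} [TopologicalSpace X] [MeasurableSpace X] {T L : ℝ}
    (D : DynMetric X T L) (μ : ℝ → Measure X) (t : ℝ) : ℝ :=
  Filter.limsup (fun s => Wd (D.d t) (μ s) (μ t) / |s - t|) (𝓝[≠] t)

open Classical in
/-- Relative (Boltzmann) entropy `Ent(μ|ν) = ∫ ρ log ρ dν` (`ρ = dμ/dν`), equal to `+∞`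
if `μ` is not absolutely continuous w.r.t. `ν` or if the integral does not exist. -/
noncomputable def relEnt {X : Type*} [MeasurableSpace X] (μ ν : Measure X) : EReal :=
  if μ ≪ ν ∧ Integrable (fun x => Real.log ((μ.rnDeriv ν x).toReal)) μ
  then ((∫ x, Real.log ((μ.rnDeriv ν x).toReal) ∂μ : ℝ) : EReal) else ⊤

/-- The time-dependent reference measures `m_t = e^{-f_t} m`. -/
noncomputable def refMeas {X : Type*} [MeasurableSpace X] (m : Measure X) (f : ℝ → X → ℝ)
    (t : ℝ) : Measure X :=
  m.withDensity (fun x => ENNReal.ofReal (Real.exp (-(f t x))))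

/-- The time-dependent relative entropy `S_t(μ) = Ent(μ | m_t)`. -/
noncomputable def entS {X : Type*} [MeasurableSpace X] (m : Measure X) (f : ℝ → X → ℝ)
    (t : ℝ) (μ : Measure X) : EReal :=
  relEnt μ (refMeas m f t)


section ParametricDerivative

variable {X : Type*} [MeasurableSpace X] {g : X → ℝ → ℝ} {K : ℝ≥0}

/-- Give `X` the topology induced by the values at rational times: its open sets are measurable,
and the uniform Lipschitz bound propagates continuity from rational to all times. -/
theorem exists_topology_continuous_uncurry_of_lipschitzWith (hg : ∀ x, LipschitzWith K (g x))
    (hgm : ∀ t, Measurable fun x => g x t) :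
    ∃ _ : TopologicalSpace X, OpensMeasurableSpace X ∧ Continuous (Function.uncurry g) := by
  let Ψ : X → ℚ → ℝ := fun x q => g x q
  have hΨ : Measurable Ψ := measurable_pi_iff.2 fun q => hgm q
  let _ : TopologicalSpace X := .induced Ψ inferInstance
  refine ⟨‹_›, ⟨MeasurableSpace.generateFrom_le ?_⟩, ?_⟩
  · rintro s ⟨u, hu, rfl⟩
    exact hΨ hu.measurableSet
  · refine continuous_prod_of_dense_continuous_lipschitzWith' _ K Rat.denseRange_cast hg ?_
    rintro _ ⟨q, rfl⟩
    exact (continuous_apply q).comp (continuous_induced_dom (f := Ψ))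

variable (hg : ∀ x, LipschitzWith K (g x)) (hgm : ∀ t, Measurable fun x => g x t)
include hg hgm

theorem measurableSet_differentiableAt_of_lipschitzWith :
    MeasurableSet {p : X × ℝ | DifferentiableAt ℝ (g p.1) p.2} := by
  obtain ⟨_, _, hcont⟩ := exists_topology_continuous_uncurry_of_lipschitzWith hg hgm
  exact measurableSet_of_differentiableAt_with_param ℝ hcont

theorem measurable_deriv_of_lipschitzWith : Measurable fun p : X × ℝ => deriv (g p.1) p.2 := by
  obtain ⟨_, _, hcont⟩ := exists_topology_continuous_uncurry_of_lipschitzWith hg hgm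
  exact measurable_deriv_with_param hcont

theorem ae_ae_differentiableAt_of_lipschitzWith (m : Measure X) [SFinite m] :
    ∀ᵐ t, ∀ᵐ x ∂m, DifferentiableAt ℝ (g x) t :=
  (Measure.ae_ae_comm (measurableSet_differentiableAt_of_lipschitzWith hg hgm)).1 <|
    ae_of_all _ fun x => (hg x).ae_differentiableAt_real

theorem hasDerivAt_integral_of_lipschitzWith (μ : Measure X) [IsFiniteMeasure μ] {t : ℝ}
    (hint : Integrable (fun x => g x t) μ) (hdiff : ∀ᵐ x ∂μ, DifferentiableAt ℝ (g x) t) :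
    HasDerivAt (fun s => ∫ x, g x s ∂μ) (∫ x, deriv (g x) t ∂μ) t :=
  (hasDerivAt_integral_of_dominated_loc_of_lip (bound := fun _ => K) univ_mem
    (Eventually.of_forall fun s => (hgm s).aestronglyMeasurable) hint
    ((measurable_deriv_of_lipschitzWith hg hgm).comp measurable_prodMk_right).aestronglyMeasurable
    (ae_of_all _ fun x => by simpa using (hg x).lipschitzOnWith (s := univ)) (integrable_const _)
    (hdiff.mono fun x hx => hx.hasDerivAt)).2

end ParametricDerivative

theorem exists_hasDerivWithinAt_integral_of_lipschitzOnWith {X : Type*} [MeasurableSpace X]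
    (m : Measure X) [SFinite m] {a b : ℝ} (hab : a ≤ b) {f : ℝ → X → ℝ} {K : ℝ≥0}
    (hfm : ∀ t, Measurable (f t)) (hf : ∀ x, LipschitzOnWith K (fun t => f t x) (Icc a b)) :
    ∃ N : Set ℝ, volume Nᶜ = 0 ∧ ∃ f' : ℝ → X → ℝ, ∀ t ∈ N ∩ Icc a b,
      (∀ᵐ x ∂m, HasDerivWithinAt (fun r => f r x) (f' t x) (Icc a b) t) ∧
      ∀ μ : Measure X, [IsFiniteMeasure μ] → μ ≪ m → Integrable (f t) μ →
        HasDerivWithinAt (fun r => ∫ x, f r x ∂μ) (∫ x, f' t x ∂μ) (Icc a b) t := by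
  set g : X → ℝ → ℝ := fun x t => f (projIcc a b hab t) x
  have hg (x : X) : LipschitzWith K (g x) := by
    have h := (hf x).to_restrict.comp (LipschitzWith.projIcc hab)
    rwa [mul_one] at h
  have hgm : ∀ t, Measurable fun x => g x t := fun t => hfm _
  have hgf (x : X) (r : ℝ) (hr : r ∈ Icc a b) : g x r = f r x := by
    simp [g, projIcc_of_mem hab hr]
  refine ⟨{t | ∀ᵐ x ∂m, DifferentiableAt ℝ (g x) t},
    ae_ae_differentiableAt_of_lipschitzWith hg hgm m, fun t x => deriv (g x) t,
    fun t ⟨htN, ht⟩ => ⟨?_, fun μ _ hμ hint => ?_⟩⟩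
  · filter_upwards [htN] with x hx
    exact hx.hasDerivAt.hasDerivWithinAt.congr_of_mem (fun r hr => (hgf x r hr).symm) ht
  · have hint' : Integrable (fun x => g x t) μ :=
      hint.congr (ae_of_all _ fun x => (hgf x t ht).symm)
    exact (hasDerivAt_integral_of_lipschitzWith hg hgm μ hint' (hμ.ae_le htN)).hasDerivWithinAt
      |>.congr_of_mem (fun r hr => integral_congr_ae (ae_of_all _ fun x => (hgf x r hr).symm)) ht

section RelativeEntropy

variable {X : Type*} [MeasurableSpace X] {μ ν : Measure X}

theorem relEnt_of_ac_of_integrable (hac : μ ≪ ν) (hint : Integrable (llr μ ν) μ) :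
    relEnt μ ν = ∫ x, llr μ ν x ∂μ :=
  if_pos ⟨hac, hint⟩

theorem relEnt_eq_top (h : ¬(μ ≪ ν ∧ Integrable (llr μ ν) μ)) : relEnt μ ν = ⊤ :=
  if_neg h

theorem relEnt_lt_top_iff : relEnt μ ν < ⊤ ↔ μ ≪ ν ∧ Integrable (llr μ ν) μ := by
  by_cases h : μ ≪ ν ∧ Integrable (llr μ ν) μ
  · simpa [relEnt_of_ac_of_integrable h.1 h.2] using h
  · simpa [relEnt_eq_top h] using h

theorem relEnt_ne_bot : relEnt μ ν ≠ ⊥ := by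
  by_cases h : μ ≪ ν ∧ Integrable (llr μ ν) μ
  · simp [relEnt_of_ac_of_integrable h.1 h.2]
  · simp [relEnt_eq_top h]

theorem relEnt_nonneg [IsProbabilityMeasure μ] [IsProbabilityMeasure ν] : 0 ≤ relEnt μ ν := by
  by_cases h : μ ≪ ν ∧ Integrable (llr μ ν) μ
  · have := InformationTheory.integral_llr_add_sub_measure_univ_nonneg h.1 h.2
    simp only [probReal_univ, add_sub_cancel_right] at this
    simpa [relEnt_of_ac_of_integrable h.1 h.2] using this
  · simp [relEnt_eq_top h]

variable [SigmaFinite μ] [SigmaFinite ν] {φ : X → ℝ}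

theorem llr_withDensity_exp_neg (hac : μ ≪ ν) (hφ : Measurable φ) :
    llr μ (ν.withDensity fun x => ENNReal.ofReal (Real.exp (-φ x))) =ᵐ[μ] llr μ ν + φ := by
  have h := Measure.rnDeriv_withDensity_right μ ν
    (f := fun x => ENNReal.ofReal (Real.exp (-φ x))) (hφ.neg.exp.ennreal_ofReal).aemeasurable
    (ae_of_all _ fun x => by simp [Real.exp_pos]) (ae_of_all _ fun _ => ENNReal.ofReal_ne_top)
  filter_upwards [hac.ae_le h, Measure.rnDeriv_pos hac, hac.ae_le (Measure.rnDeriv_lt_top μ ν)]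
    with x hx hpos hlt
  have hρ : (μ.rnDeriv ν x).toReal ≠ 0 := (ENNReal.toReal_pos hpos.ne' hlt.ne).ne'
  rw [llr, hx, ENNReal.toReal_mul, ENNReal.toReal_inv, ENNReal.toReal_ofReal (Real.exp_nonneg _),
    ← Real.exp_neg, neg_neg, Real.log_mul (Real.exp_ne_zero _) hρ, Real.log_exp, Pi.add_apply,
    llr, add_comm]

theorem relEnt_withDensity_exp_neg (hφ : Measurable φ) (hφi : Integrable φ μ) :
    relEnt μ (ν.withDensity fun x => ENNReal.ofReal (Real.exp (-φ x))) =
      relEnt μ ν + ∫ x, φ x ∂μ := by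
  by_cases hac : μ ≪ ν
  · have hac' : μ ≪ ν.withDensity fun x => ENNReal.ofReal (Real.exp (-φ x)) :=
      hac.trans <| withDensity_absolutelyContinuous' (hφ.neg.exp.ennreal_ofReal).aemeasurable
        (ae_of_all _ fun x => by simp [Real.exp_pos])
    have hllr := llr_withDensity_exp_neg hac hφ
    by_cases hint : Integrable (llr μ ν) μ
    · rw [relEnt_of_ac_of_integrable hac' ((integrable_congr hllr).2 (hint.add hφi)),
        relEnt_of_ac_of_integrable hac hint, integral_congr_ae hllr, integral_add' hint hφi,
        EReal.coe_add]
    · rw [relEnt_eq_top (fun h => hint h.2), relEnt_eq_top, EReal.top_add_coe]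
      exact fun h => hint ((integrable_add_iff_integrable_left hφi).1
        ((integrable_congr hllr).1 h.2))
  · rw [relEnt_eq_top (fun h => hac h.1), relEnt_eq_top, EReal.top_add_coe]
    exact fun h => hac (h.1.trans (withDensity_absolutelyContinuous _ _))

end RelativeEntropy

section TimeDependentEntropy

variable {X : Type*} [MeasurableSpace X] {m μ : Measure X} {f : ℝ → X → ℝ} {t : ℝ}

theorem abs_integral_sub_integral_le [IsProbabilityMeasure μ] {φ ψ : X → ℝ}
    (hφ : Integrable φ μ) (hψ : Integrable ψ μ) {c : ℝ} (h : ∀ x, |φ x - ψ x| ≤ c) :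
    |∫ x, φ x ∂μ - ∫ x, ψ x ∂μ| ≤ c := by
  simpa [integral_sub hφ hψ] using
    norm_integral_le_of_norm_le_const (μ := μ) (f := fun x => φ x - ψ x) (ae_of_all _ h)

section

variable [SigmaFinite m] [SigmaFinite μ] (hf : Measurable (f t)) (hfi : Integrable (f t) μ)
include hf hfi

theorem entS_eq_relEnt_add_integral : entS m f t μ = relEnt μ m + ∫ x, f t x ∂μ :=
  relEnt_withDensity_exp_neg hf hfi

theorem entS_lt_top_iff : entS m f t μ < ⊤ ↔ relEnt μ m < ⊤ := by
  rw [entS_eq_relEnt_add_integral hf hfi]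
  rcases eq_top_or_lt_top (relEnt μ m) with h | h
  · simp [h]
  · simpa [h] using EReal.add_lt_top h.ne (EReal.coe_ne_top _)

theorem toReal_entS (h : relEnt μ m < ⊤) :
    (entS m f t μ).toReal = (relEnt μ m).toReal + ∫ x, f t x ∂μ := by
  rw [entS_eq_relEnt_add_integral hf hfi,
    EReal.toReal_add h.ne relEnt_ne_bot (EReal.coe_ne_top _) (EReal.coe_ne_bot _), EReal.toReal_coe]

end

theorem neg_le_entS [IsProbabilityMeasure m] [IsProbabilityMeasure μ] (hf : Measurable (f t))
    {C : ℝ} (hC : ∀ x, |f t x| ≤ C) : ((-C : ℝ) : EReal) ≤ entS m f t μ := by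
  have hint : -C ≤ ∫ x, f t x ∂μ := neg_le_of_abs_le <| by
    simpa using norm_integral_le_of_norm_le_const (μ := μ) (f := f t) (ae_of_all _ hC)
  rw [entS_eq_relEnt_add_integral hf (.of_bound hf.aestronglyMeasurable C (ae_of_all _ hC)),
    ← zero_add ((-C : ℝ) : EReal)]
  exact add_le_add relEnt_nonneg (EReal.coe_le_coe_iff.2 hint)

end TimeDependentEntropy

theorem entropy_properties_general {X : Type*} [TopologicalSpace X] [MeasurableSpace X]
    {T L : ℝ} (hT : 0 < T) (D : DynMetric X T L)
    (m : Measure X) (hm : IsProbabilityMeasure m)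
    (f : ℝ → X → ℝ) (hfm : ∀ t, Measurable (f t))
    (Cf : ℝ) (hCf : ∀ t ∈ Set.Icc (0:ℝ) T, ∀ x : X, |f t x| ≤ Cf)
    (Lstar : ℝ)
    (hlip : ∀ s ∈ Set.Icc (0:ℝ) T, ∀ t ∈ Set.Icc (0:ℝ) T, ∀ x : X,
      |f t x - f s x| ≤ Lstar * |t - s|) :
    (∀ s ∈ Set.Icc (0:ℝ) T, ∀ t ∈ Set.Icc (0:ℝ) T, ∀ μ : Measure X, MemP2 D μ →
      (entS m f s μ < ⊤ ↔ entS m f t μ < ⊤)) ∧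
    (∀ t ∈ Set.Icc (0:ℝ) T, ∀ μ : Measure X, MemP2 D μ →
      ((-Cf : ℝ) : EReal) ≤ entS m f t μ) ∧
    (∀ t ∈ Set.Icc (0:ℝ) T, ∀ μ : Measure X, MemP2 D μ →
      entS m f t μ = relEnt μ m + ((∫ x, f t x ∂μ : ℝ) : EReal)) ∧
    (∀ μ : Measure X, MemP2 D μ → (∃ t₀ ∈ Set.Icc (0:ℝ) T, entS m f t₀ μ < ⊤) →
      ∀ s ∈ Set.Icc (0:ℝ) T, ∀ t ∈ Set.Icc (0:ℝ) T,
        |(entS m f t μ).toReal - (entS m f s μ).toReal| ≤ Lstar * |t - s|) ∧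
    ∃ N : Set ℝ, volume (Set.Icc (0:ℝ) T \ N) = 0 ∧ ∃ f' : ℝ → X → ℝ,
      ∀ t ∈ N ∩ Set.Icc (0:ℝ) T,
        (∀ᵐ x ∂m, HasDerivWithinAt (fun r => f r x) (f' t x) (Set.Icc (0:ℝ) T) t) ∧
        ∀ μ : Measure X, MemP2 D μ → entS m f t μ < ⊤ →
          HasDerivWithinAt (fun r => (entS m f r μ).toReal)
            (∫ x, f' t x ∂μ) (Set.Icc (0:ℝ) T) t := by
  have hfi (μ : Measure X) (hμ : MemP2 D μ) (t : ℝ) (ht : t ∈ Icc 0 T) :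
      Integrable (f t) μ :=
    have := hμ.1; .of_bound (hfm t).aestronglyMeasurable Cf (ae_of_all _ (hCf t ht))
  have hfin (μ : Measure X) (hμ : MemP2 D μ) (t : ℝ) (ht : t ∈ Icc 0 T) :
      entS m f t μ < ⊤ ↔ relEnt μ m < ⊤ :=
    have := hμ.1; entS_lt_top_iff (hfm t) (hfi μ hμ t ht)
  have hfK (x : X) : LipschitzOnWith Lstar.toNNReal (fun t => f t x) (Icc 0 T) :=
    .of_dist_le_mul fun t ht s hs => (hlip s hs t ht x).trans <|
      mul_le_mul_of_nonneg_right (Real.le_coe_toNNReal _) (abs_nonneg _)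
  obtain ⟨N, hN, f', hf'⟩ := exists_hasDerivWithinAt_integral_of_lipschitzOnWith m hT.le hfm hfK
  refine ⟨fun s hs t ht μ hμ => (hfin μ hμ s hs).trans (hfin μ hμ t ht).symm,
    fun t ht μ hμ => ?_, fun t ht μ hμ => ?_,
    fun μ hμ ⟨t₀, ht₀, h₀⟩ s hs t ht => ?_,
    N, measure_mono_null (sdiff_subset_compl _ _) hN, f',
    fun t ⟨htN, ht⟩ => ⟨(hf' t ⟨htN, ht⟩).1, fun μ hμ hμt => ?_⟩⟩
  all_goals have := hμ.1
  · exact neg_le_entS (hfm t) (hCf t ht)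
  · exact entS_eq_relEnt_add_integral (hfm t) (hfi μ hμ t ht)
  · have hrel := (hfin μ hμ t₀ ht₀).1 h₀
    rw [toReal_entS (hfm t) (hfi μ hμ t ht) hrel, toReal_entS (hfm s) (hfi μ hμ s hs) hrel,
      add_sub_add_left_eq_sub]
    exact abs_integral_sub_integral_le (hfi μ hμ t ht) (hfi μ hμ s hs) (hlip s hs t ht)
  · have hrel := (hfin μ hμ t ht).1 hμt
    exact ((hf' t ⟨htN, ht⟩).2 μ (relEnt_lt_top_iff.1 hrel).1 (hfi μ hμ t ht)).const_add _
      |>.congr_of_mem (fun r hr => toReal_entS (hfm r) (hfi μ hμ r hr) hrel) ht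

/-- Basic properties of the time-dependent relative entropy:
time-independent domain, uniform lower bound, decomposition
`S_t(μ) = Ent(μ|m) + ∫ f_t dμ` with Lipschitz dependence on `t`, and a common
full-measure set of differentiability points with derivative `∫ ∂_t f_t dμ`. -/
theorem entropy_properties {X : Type*} [TopologicalSpace X] [MeasurableSpace X]
    [BorelSpace X] {T L : ℝ} (hT : 0 < T) (hL : 0 ≤ L) (D : DynMetric X T L)
    (m : Measure X) (hm : IsProbabilityMeasure m)
    (f : ℝ → X → ℝ) (hfm : ∀ t, Measurable (f t))
    (Cf : ℝ) (hCf : ∀ t ∈ Set.Icc (0:ℝ) T, ∀ x : X, |f t x| ≤ Cf)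
    (Lstar : ℝ) (hLstar : 0 ≤ Lstar)
    (hlip : ∀ s ∈ Set.Icc (0:ℝ) T, ∀ t ∈ Set.Icc (0:ℝ) T, ∀ x : X,
      |f t x - f s x| ≤ Lstar * |t - s|) :
    (∀ s ∈ Set.Icc (0:ℝ) T, ∀ t ∈ Set.Icc (0:ℝ) T, ∀ μ : Measure X, MemP2 D μ →
      (entS m f s μ < ⊤ ↔ entS m f t μ < ⊤)) ∧
    (∀ t ∈ Set.Icc (0:ℝ) T, ∀ μ : Measure X, MemP2 D μ →
      ((-Cf : ℝ) : EReal) ≤ entS m f t μ) ∧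
    (∀ t ∈ Set.Icc (0:ℝ) T, ∀ μ : Measure X, MemP2 D μ →
      entS m f t μ = relEnt μ m + ((∫ x, f t x ∂μ : ℝ) : EReal)) ∧
    (∀ μ : Measure X, MemP2 D μ → (∃ t₀ ∈ Set.Icc (0:ℝ) T, entS m f t₀ μ < ⊤) →
      ∀ s ∈ Set.Icc (0:ℝ) T, ∀ t ∈ Set.Icc (0:ℝ) T,
        |(entS m f t μ).toReal - (entS m f s μ).toReal| ≤ Lstar * |t - s|) ∧
    ∃ N : Set ℝ, volume (Set.Icc (0:ℝ) T \ N) = 0 ∧ ∃ f' : ℝ → X → ℝ,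
      ∀ t ∈ N ∩ Set.Icc (0:ℝ) T,
        (∀ᵐ x ∂m, HasDerivWithinAt (fun r => f r x) (f' t x) (Set.Icc (0:ℝ) T) t) ∧
        ∀ μ : Measure X, MemP2 D μ → entS m f t μ < ⊤ →
          HasDerivWithinAt (fun r => (entS m f r μ).toReal)
            (∫ x, f' t x ∂μ) (Set.Icc (0:ℝ) T) t :=
  entropy_properties_general hT D m hm f hfm Cf hCf Lstar hlip
end
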